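/- arXiv:2308.05772 — 4 statements merged into one kernel-verified Lean document; each statement's English description precedes it below -/
import Mathlib

section
/- Let M be an even delta-matroid and x, y two distinct elements of its ground set. Then x and y belong to the same component of M if and only if there exist bases B1 and B2 of M with B1 △ B2 = {x, y}. -/
open scoped symmDiff

/-- A delta-matroid: a finite ground set `E` and a nonempty family `B` of subsets of `E`
satisfying the symmetric exchange axiom. -/
structure DeltaMatroid (α : Type*) [DecidableEq α] where
  E : Finset α
  B : Finset (Finset α)
  nonempty : B.Nonempty
  subset_ground : ∀ S ∈ B, S ⊆ E
  exchange : ∀ B₁ ∈ B, ∀ B₂ ∈ B, ∀ e ∈ B₁ ∆ B₂,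
    ∃ f ∈ B₁ ∆ B₂, B₁ ∆ ({e, f} : Finset α) ∈ B

variable {α : Type*} [DecidableEq α]

/-- A delta-matroid is even if all bases have cardinalities of the same parity. -/
def DeltaMatroid.IsEven (M : DeltaMatroid α) : Prop :=
  ∀ B₁ ∈ M.B, ∀ B₂ ∈ M.B, B₁.card % 2 = B₂.card % 2

/-- `X` is a separator of `M` if `M` is the direct sum of its restrictions to `X`
and to `E \ X`; equivalently, bases can be freely recombined across `X`. -/
def DeltaMatroid.IsSeparator (M : DeltaMatroid α) (X : Finset α) : Prop :=
  X ⊆ M.E ∧ ∀ B₁ ∈ M.B, ∀ B₂ ∈ M.B, (B₁ ∩ X) ∪ (B₂ \ X) ∈ M.B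

/-- A component is a minimal nonempty separator. -/
def DeltaMatroid.IsComponent (M : DeltaMatroid α) (C : Finset α) : Prop :=
  M.IsSeparator C ∧ C.Nonempty ∧
    ∀ X, M.IsSeparator X → X.Nonempty → X ⊆ C → X = C

/-- The basis graph of a delta-matroid: vertices are the bases, two bases being
adjacent iff their symmetric difference has exactly two elements. -/
def DeltaMatroid.BG (M : DeltaMatroid α) : SimpleGraph ↥M.B where
  Adj S T := ((S : Finset α) ∆ (T : Finset α)).card = 2
  symm := by
    constructor
    intro S T h
    rwa [symmDiff_comm]
  loopless := by
    constructor
    intro S h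
    simp [symmDiff_self] at h

/-- The graph `G` has a cycle of length `k` through the edge `e`. -/
def CycleThroughEdge {V : Type*} (G : SimpleGraph V) (e : Sym2 V) (k : ℕ) : Prop :=
  ∃ (v : V) (c : G.Walk v v), c.IsCycle ∧ c.length = k ∧ e ∈ c.edges

/-- An edge is pancyclic if it lies in a cycle of every length `3 ≤ k ≤ n`. -/
def EdgePancyclic {V : Type*} [Fintype V] (G : SimpleGraph V) (e : Sym2 V) : Prop :=
  ∀ k, 3 ≤ k → k ≤ Fintype.card V → CycleThroughEdge G e k

/-- An edge is almost pancyclic if it lies in a cycle of every length `4 ≤ k ≤ n`. -/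
def EdgeAlmostPancyclic {V : Type*} [Fintype V] (G : SimpleGraph V) (e : Sym2 V) : Prop :=
  ∀ k, 4 ≤ k → k ≤ Fintype.card V → CycleThroughEdge G e k

/-- An edge is even pancyclic if it lies in a cycle of length `k` for every
`3 ≤ k ≤ n` with `k` even or `k = n`. -/
def EdgeEvenPancyclic {V : Type*} [Fintype V] (G : SimpleGraph V) (e : Sym2 V) : Prop :=
  ∀ k, 3 ≤ k → k ≤ Fintype.card V → (Even k ∨ k = Fintype.card V) →
    CycleThroughEdge G e k

/-- The hypercube graph `Q_d`: vertices `{0,1}^d`, adjacent iff they differ in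
exactly one coordinate. -/
def hypercube (d : ℕ) : SimpleGraph (Fin d → Bool) where
  Adj x y := ∃ i, x i ≠ y i ∧ ∀ j, j ≠ i → x j = y j
  symm := by
    constructor
    rintro x y ⟨i, h, hj⟩
    exact ⟨i, h.symm, fun j hne => (hj j hne).symm⟩
  loopless := by
    constructor
    rintro x ⟨i, h, -⟩
    exact h rfl

/-!
Call `x` and `y` exchangeable when two bases differ exactly in `{x, y}`. In an even
delta-matroid this relation is transitive. Granting that, the elements exchangeable with `x`
form a separator, and a minimal one, since by parity no separator can split an exchangeable
pair.

Transitivity is seen in the fundamental graph at a basis `F`, where `u` and `v` are adjacent when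
`F ∆ {u, v}` is a basis. Two bases at distance four admit a common exchange for every element of
their difference; hence an edge at `F` survives at `F ∆ {a, b}` or detours through `a, b`, and the
connected components of the fundamental graph do not depend on `F`. Finally, if `x, v₁, v₂, …, y`
is a path at `F`, then `x` is adjacent to `v₂` at `F ∆ {x, v₁}`, so `y` comes closer to `x`, until
the two are adjacent, that is, exchangeable.
-/

open Finset SimpleGraph

namespace Finset

theorem card_symmDiff_add_two_mul_card_inter (s t : Finset α) :
    #(s ∆ t) + 2 * #(s ∩ t) = #s + #t := by
  have hsub : s ∩ t ⊆ s ∪ t := inter_subset_union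
  have := card_union_add_card_inter s t
  have := card_le_card hsub
  rw [symmDiff_eq_sup_sdiff_inf, sup_eq_union, inf_eq_inter, card_sdiff_of_subset hsub]
  omega

theorem pair_symmDiff_pair {a b c : α} (hab : a ≠ b) (hac : a ≠ c) (hbc : b ≠ c) :
    ({a, b} : Finset α) ∆ {b, c} = {a, c} := by
  ext x
  simp only [mem_symmDiff, mem_insert, mem_singleton]
  grind

end Finset

namespace DeltaMatroid

variable {M : DeltaMatroid α} {X Y D : Finset α} {e v : α}

theorem IsEven.even_card_symmDiff (hM : M.IsEven) (hX : X ∈ M.B) (hY : Y ∈ M.B) :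
    Even #(X ∆ Y) := by
  have := card_symmDiff_add_two_mul_card_inter X Y
  have := hM X hX Y hY
  rw [Nat.even_iff]
  omega

theorem IsEven.exists_exchange_ne (hM : M.IsEven) (hX : X ∈ M.B) (hY : Y ∈ M.B)
    (he : e ∈ X ∆ Y) : ∃ f ∈ X ∆ Y, f ≠ e ∧ X ∆ {e, f} ∈ M.B := by
  obtain ⟨f, hf, hXf⟩ := M.exchange X hX Y hY e he
  refine ⟨f, hf, ?_, hXf⟩
  rintro rfl
  simpa using hM.even_card_symmDiff hX hXf

def exchangePartners (M : DeltaMatroid α) (X D : Finset α) (e : α) : Finset α :=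
  (D.erase e).filter fun v => X ∆ {e, v} ∈ M.B

theorem IsEven.exchangePartners_nonempty (hM : M.IsEven) (hX : X ∈ M.B) (hY : Y ∈ M.B)
    (hD : X ∆ Y = D) (he : e ∈ D) : (M.exchangePartners X D e).Nonempty := by
  subst hD
  obtain ⟨f, hf, hfe, hXf⟩ := hM.exists_exchange_ne hX hY he
  exact ⟨f, mem_filter.2 ⟨mem_erase.2 ⟨hfe, hf⟩, hXf⟩⟩

/-- If `v` is not an exchange partner of `e` on the side of `X`, the partner `u` of `v` leaves a
fourth element `t` with `{v, u} = D \ {e, t}`, so that `Y ∆ {e, t} = X ∆ {v, u}`. -/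
theorem IsEven.mem_exchangePartners_or (hM : M.IsEven) (hX : X ∈ M.B) (hY : Y ∈ M.B)
    (hD : X ∆ Y = D) (hcard : #D = 4) (he : e ∈ D) (hv : v ∈ D.erase e) :
    v ∈ M.exchangePartners X D e ∨ ∃ t ∈ M.exchangePartners Y D e, t ≠ v := by
  obtain ⟨hve, hvD⟩ := mem_erase.1 hv
  obtain ⟨u, huD, huv, hXu⟩ := hM.exists_exchange_ne hX hY (hD ▸ hvD)
  rw [hD] at huD
  rcases eq_or_ne u e with rfl | hue
  · exact .inl (mem_filter.2 ⟨hv, by rwa [pair_comm]⟩)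
  have hone : #(((D.erase e).erase v).erase u) = 1 := by
    rw [card_erase_of_mem (by simp [*]), card_erase_of_mem (by simp [*]),
      card_erase_of_mem he, hcard]
  obtain ⟨t, ht⟩ := card_eq_one.1 hone
  have htD : t ∈ ((D.erase e).erase v).erase u := ht ▸ mem_singleton_self t
  simp only [mem_erase] at htD
  obtain ⟨htu, htv, hte, htD⟩ := htD
  have hmem : ∀ a ∈ D, a = e ∨ a = v ∨ a = u ∨ a = t := fun a ha => by
    by_contra! h
    have : a ∈ ((D.erase e).erase v).erase u := by simp [h, ha]
    simp [ht, h.2.2.2] at this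
  have hpair : D ∆ {e, t} = {v, u} := by
    ext a
    have := hmem a
    simp only [mem_symmDiff, mem_insert, mem_singleton]
    grind
  refine .inr ⟨t, mem_filter.2 ⟨mem_erase.2 ⟨hte, htD⟩, ?_⟩, htv⟩
  rwa [← symmDiff_symmDiff_cancel_left X Y, hD, symmDiff_assoc, hpair]

theorem IsEven.one_lt_card_exchangePartners (hM : M.IsEven) (hX : X ∈ M.B) (hY : Y ∈ M.B)
    (hD : X ∆ Y = D) (hcard : #D = 4) (he : e ∈ D)
    (hdisj : Disjoint (M.exchangePartners X D e) (M.exchangePartners Y D e)) :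
    1 < #(M.exchangePartners X D e) := by
  obtain ⟨w, hw⟩ := hM.exchangePartners_nonempty hX hY hD he
  rcases hM.mem_exchangePartners_or hY hX (symmDiff_comm X Y ▸ hD) hcard he
    (mem_of_mem_filter w hw) with hw' | ⟨t, ht, htw⟩
  · exact absurd hw' (disjoint_left.1 hdisj hw)
  · exact one_lt_card.2 ⟨t, ht, w, hw, htw⟩

theorem IsEven.exists_exchange_both (hM : M.IsEven) (hX : X ∈ M.B) (hY : Y ∈ M.B)
    (hcard : #(X ∆ Y) = 4) (he : e ∈ X ∆ Y) :
    ∃ f ∈ X ∆ Y, f ≠ e ∧ X ∆ {e, f} ∈ M.B ∧ Y ∆ {e, f} ∈ M.B := by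
  -- otherwise `e` has at least two partners on either side, among only three candidates
  by_contra! h
  have hdisj : Disjoint (M.exchangePartners X (X ∆ Y) e) (M.exchangePartners Y (X ∆ Y) e) :=
    disjoint_left.2 fun f hfX hfY =>
      have hf := mem_erase.1 (mem_of_mem_filter f hfX)
      h f hf.2 hf.1 (mem_filter.1 hfX).2 (mem_filter.1 hfY).2
  have hX' := hM.one_lt_card_exchangePartners hX hY rfl hcard he hdisj
  have hY' := hM.one_lt_card_exchangePartners hY hX (symmDiff_comm Y X) hcard he hdisj.symm
  have hunion : #(M.exchangePartners X (X ∆ Y) e ∪ M.exchangePartners Y (X ∆ Y) e) ≤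
      #((X ∆ Y).erase e) :=
    card_le_card (union_subset (filter_subset _ _) (filter_subset _ _))
  rw [card_union_of_disjoint hdisj, card_erase_of_mem he, hcard] at hunion
  omega

def fundGraph (M : DeltaMatroid α) (F : Finset α) : SimpleGraph α where
  Adj u v := u ≠ v ∧ F ∆ {u, v} ∈ M.B
  symm := ⟨fun _ _ h => ⟨h.1.symm, by rw [pair_comm]; exact h.2⟩⟩
  loopless := ⟨fun _ h => h.1 rfl⟩

variable {F : Finset α} {a b c u w x y : α}

theorem fundGraph_adj : (M.fundGraph F).Adj u v ↔ u ≠ v ∧ F ∆ {u, v} ∈ M.B := Iff.rfl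

theorem fundGraph_symmDiff_adj (hF : F ∈ M.B) (hab : a ≠ b) :
    (M.fundGraph (F ∆ {a, b})).Adj a b :=
  fundGraph_adj.2 ⟨hab, by rwa [symmDiff_symmDiff_cancel_right]⟩

theorem fundGraph_symmDiff_adj_of_adj (hab : a ≠ b) (hbc : b ≠ c) (hac : a ≠ c)
    (h : (M.fundGraph F).Adj a c) : (M.fundGraph (F ∆ {a, b})).Adj b c :=
  fundGraph_adj.2 ⟨hbc, by rw [symmDiff_assoc, pair_symmDiff_pair hab hac hbc]; exact h.2⟩

/-- Apply `exists_exchange_both` to the bases `F ∆ {u, v}` and `F ∆ {a, b}`, which differ in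
`{u, v, a, b}`. -/
theorem IsEven.fundGraph_adj_or_detour (hM : M.IsEven) (hF' : F ∆ {a, b} ∈ M.B) (hab : a ≠ b)
    (hadj : (M.fundGraph F).Adj u v) (hua : u ≠ a) (hub : u ≠ b) (hva : v ≠ a) (hvb : v ≠ b) :
    (M.fundGraph (F ∆ {a, b})).Adj u v ∨
      ((M.fundGraph (F ∆ {a, b})).Adj u a ∧ (M.fundGraph (F ∆ {a, b})).Adj b v) ∨
      ((M.fundGraph (F ∆ {a, b})).Adj u b ∧ (M.fundGraph (F ∆ {a, b})).Adj a v) := by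
  obtain ⟨huv, hFuv⟩ := fundGraph_adj.1 hadj
  simp only [fundGraph_adj]
  have hdisj : Disjoint ({u, v} : Finset α) {a, b} := by
    simp [hua.symm, hub.symm, hva.symm, hvb.symm]
  have hdiff : (F ∆ {u, v}) ∆ (F ∆ {a, b}) = {u, v} ∪ {a, b} := by
    rw [symmDiff_symmDiff_symmDiff_comm, symmDiff_self, bot_symmDiff, hdisj.symmDiff_eq_sup,
      sup_eq_union]
  have hcard : #((F ∆ {u, v}) ∆ (F ∆ {a, b})) = 4 := by
    rw [hdiff, card_union_of_disjoint hdisj, card_pair huv, card_pair hab]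
  obtain ⟨g, hg, hgu, hX, hY⟩ := hM.exists_exchange_both hFuv hF' hcard (e := u) (by simp [hdiff])
  simp only [hdiff, mem_union, mem_insert, mem_singleton] at hg
  rw [symmDiff_assoc, pair_comm u v] at hX
  rcases hg with (hg | hg) | hg | hg <;> subst g
  · exact absurd rfl hgu
  · exact .inl ⟨huv, hY⟩
  · rw [pair_symmDiff_pair huv.symm hva hua] at hX
    exact .inr (.inl ⟨⟨hua, hY⟩, fundGraph_adj.1 <| fundGraph_symmDiff_adj_of_adj hab hvb.symm
      hva.symm ⟨hva.symm, by rwa [pair_comm]⟩⟩)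
  · rw [pair_symmDiff_pair huv.symm hvb hub] at hX
    refine .inr (.inr ⟨⟨hub, hY⟩, ?_⟩)
    rw [pair_comm a b]
    exact fundGraph_adj.1 <|
      fundGraph_symmDiff_adj_of_adj hab.symm hva.symm hvb.symm ⟨hvb.symm, by rwa [pair_comm]⟩

theorem IsEven.exists_walk_fundGraph_symmDiff (hM : M.IsEven) (hF : F ∈ M.B)
    (hF' : F ∆ {a, b} ∈ M.B) (hab : a ≠ b) (W : (M.fundGraph F).Walk u w) (hW : ∀ s ∈ W.support, s ≠ a ∧ s ≠ b) :
    (∃ W' : (M.fundGraph (F ∆ {a, b})).Walk u w, W'.length ≤ W.length) ∨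
      ∃ W' : (M.fundGraph (F ∆ {a, b})).Walk u b, W'.length ≤ W.length + 1 := by
  induction W with
  | nil => exact .inl ⟨.nil, le_rfl⟩
  | @cons p q _ hpq W ih =>
    obtain ⟨hpa, hpb⟩ := hW p (by simp)
    obtain ⟨hqa, hqb⟩ := hW q (by simp)
    have ih := ih fun s hs => hW s (by simp [hs])
    simp only [Walk.length_cons]
    rcases hM.fundGraph_adj_or_detour hF' hab hpq hpa hpb hqa hqb with
      hpq' | ⟨hpa', -⟩ | ⟨hpb', -⟩
    · rcases ih with ⟨W', hW'⟩ | ⟨W', hW'⟩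
      · exact .inl ⟨.cons hpq' W', by simp [hW']⟩
      · exact .inr ⟨.cons hpq' W', by rw [Walk.length_cons]; omega⟩
    · exact .inr ⟨.cons hpa' (.cons (fundGraph_symmDiff_adj hF hab) .nil), by simp⟩
    · exact .inr ⟨.cons hpb' .nil, by simp⟩

theorem IsEven.fundGraph_symmDiff_reachable_of_adj (hM : M.IsEven) (hF : F ∈ M.B)
    (hF' : F ∆ {a, b} ∈ M.B) (hab : a ≠ b) (huv : (M.fundGraph F).Adj u v) :
    (M.fundGraph (F ∆ {a, b})).Reachable u v := by
  have of_left : ∀ {a b v : α}, a ≠ b → (M.fundGraph F).Adj a v →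
      (M.fundGraph (F ∆ {a, b})).Reachable a v := fun {a b v} hab hav => by
    obtain rfl | hvb := eq_or_ne v b
    · exact (fundGraph_symmDiff_adj hF hab).reachable
    · exact (fundGraph_symmDiff_adj hF hab).reachable.trans
        (fundGraph_symmDiff_adj_of_adj hab hvb.symm hav.ne hav).reachable
  obtain rfl | hua := eq_or_ne u a
  · exact of_left hab huv
  obtain rfl | hub := eq_or_ne u b
  · rw [pair_comm]; exact of_left hab.symm huv
  obtain rfl | hva := eq_or_ne v a
  · exact (of_left hab huv.symm).symm
  obtain rfl | hvb := eq_or_ne v b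
  · rw [pair_comm]; exact (of_left hab.symm huv.symm).symm
  rcases hM.fundGraph_adj_or_detour hF' hab huv hua hub hva hvb with
    huv' | ⟨hua', hbv'⟩ | ⟨hub', hav'⟩
  · exact huv'.reachable
  · exact hua'.reachable.trans ((fundGraph_symmDiff_adj hF hab).reachable.trans hbv'.reachable)
  · exact hub'.reachable.trans
      ((fundGraph_symmDiff_adj hF hab).symm.reachable.trans hav'.reachable)

theorem IsEven.fundGraph_symmDiff_reachable (hM : M.IsEven) (hF : F ∈ M.B)
    (hF' : F ∆ {a, b} ∈ M.B) (hab : a ≠ b) (h : (M.fundGraph F).Reachable u v) :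
    (M.fundGraph (F ∆ {a, b})).Reachable u v := by
  obtain ⟨W⟩ := h
  induction W with
  | nil => rfl
  | cons hadj _ ih => exact (hM.fundGraph_symmDiff_reachable_of_adj hF hF' hab hadj).trans ih

theorem IsEven.fundGraph_reachable_of_mem (hM : M.IsEven) {F F' : Finset α} (hF : F ∈ M.B)
    (hF' : F' ∈ M.B) (h : (M.fundGraph F).Reachable u v) :
    (M.fundGraph F').Reachable u v := by
  induction hn : #(F ∆ F') using Nat.strong_induction_on generalizing F with
  | _ n ih =>
  obtain rfl | hne := eq_or_ne F F'
  · exact h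
  obtain ⟨e, he⟩ : (F ∆ F').Nonempty := by
    rwa [nonempty_iff_ne_empty, Ne, ← bot_eq_empty, symmDiff_eq_bot]
  obtain ⟨f, hf, hfe, hFef⟩ := hM.exists_exchange_ne hF hF' he
  have hsub : {e, f} ⊆ F ∆ F' := insert_subset he (singleton_subset_iff.2 hf)
  have hcard : #((F ∆ {e, f}) ∆ F') = n - 2 := by
    rw [symmDiff_right_comm, symmDiff_of_ge hsub, card_sdiff_of_subset hsub, card_pair hfe.symm,
      hn]
  have hpos : 0 < n := hn ▸ card_pos.2 ⟨e, he⟩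
  exact ih _ (by omega) hFef (hM.fundGraph_symmDiff_reachable hF hFef hfe.symm h) hcard

def Exchangeable (M : DeltaMatroid α) (x y : α) : Prop :=
  ∃ B₁ ∈ M.B, ∃ B₂ ∈ M.B, B₁ ∆ B₂ = {x, y}

theorem Exchangeable.symm (h : M.Exchangeable x y) : M.Exchangeable y x := by
  obtain ⟨B₁, h₁, B₂, h₂, hd⟩ := h
  exact ⟨B₁, h₁, B₂, h₂, by rw [hd, pair_comm]⟩

theorem exchangeable_of_fundGraph_adj (hF : F ∈ M.B) (h : (M.fundGraph F).Adj x y) :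
    M.Exchangeable x y :=
  ⟨F, hF, F ∆ {x, y}, h.2, symmDiff_symmDiff_cancel_left F _⟩

theorem fundGraph_adj_of_symmDiff_eq {B₁ B₂ : Finset α} (h₂ : B₂ ∈ M.B) (hd : B₁ ∆ B₂ = {x, y})
    (hxy : x ≠ y) : (M.fundGraph B₁).Adj x y :=
  fundGraph_adj.2 ⟨hxy, by rwa [← hd, symmDiff_symmDiff_cancel_left]⟩

theorem IsEven.exchangeable_of_walk (hM : M.IsEven) (hF : F ∈ M.B) (hxy : x ≠ y)
    (W : (M.fundGraph F).Walk x y) : M.Exchangeable x y := by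
  induction hn : W.length using Nat.strong_induction_on generalizing F x y with
  | _ n ih =>
  obtain ⟨p, hp, hpn⟩ : ∃ p : (M.fundGraph F).Walk x y, p.IsPath ∧ p.length ≤ n :=
    ⟨W.bypass, W.bypass_isPath, hn ▸ W.length_bypass_le_length⟩
  cases p with
  | nil => exact absurd rfl hxy
  | @cons _ v₁ _ h₁ q =>
  cases q with
  | nil => exact exchangeable_of_fundGraph_adj hF h₁
  | @cons _ v₂ _ h₂ q =>
  simp only [Walk.cons_isPath_iff, Walk.support_cons, List.mem_cons, not_or] at hp
  obtain ⟨⟨-, hv₁⟩, hxv₁, hx⟩ := hp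
  simp only [Walk.length_cons] at hpn
  have hF' : F ∆ {v₁, x} ∈ M.B := by rw [pair_comm]; exact h₁.2
  have hxv₂ : x ≠ v₂ := fun h => hx (h ▸ q.start_mem_support)
  have hadj : (M.fundGraph (F ∆ {v₁, x})).Adj x v₂ :=
    fundGraph_symmDiff_adj_of_adj (Ne.symm hxv₁) hxv₂ h₂.ne h₂
  have hq : ∀ s ∈ q.reverse.support, s ≠ v₁ ∧ s ≠ x := fun s hs => by
    rw [Walk.support_reverse, List.mem_reverse] at hs
    exact ⟨fun h => hv₁ (h ▸ hs), fun h => hx (h ▸ hs)⟩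
  rcases hM.exists_walk_fundGraph_symmDiff hF hF' (Ne.symm hxv₁) q.reverse hq with
    ⟨W', hW'⟩ | ⟨W', hW'⟩
  all_goals rw [Walk.length_reverse] at hW'
  · refine (ih _ ?_ hF' hxy.symm (W'.concat hadj.symm) rfl).symm
    rw [Walk.length_concat]
    omega
  · exact (ih _ (by omega) hF' hxy.symm W' rfl).symm

theorem IsEven.exchangeable_trans (hM : M.IsEven) (hab : M.Exchangeable a b)
    (hbc : M.Exchangeable b c) (hac : a ≠ c) : M.Exchangeable a c := by
  obtain rfl | hab' := eq_or_ne a b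
  · exact hbc
  obtain rfl | hbc' := eq_or_ne b c
  · exact hab
  obtain ⟨B₁, hB₁, B₂, hB₂, hd₁⟩ := hab
  obtain ⟨D₁, hD₁, D₂, hD₂, hd₂⟩ := hbc
  have hreach : (M.fundGraph D₁).Reachable a b :=
    hM.fundGraph_reachable_of_mem hB₁ hD₁ (fundGraph_adj_of_symmDiff_eq hB₂ hd₁ hab').reachable
  obtain ⟨W⟩ := hreach.trans (fundGraph_adj_of_symmDiff_eq hD₂ hd₂ hbc').reachable
  exact hM.exchangeable_of_walk hD₁ hac W

theorem mem_ground_of_mem_symmDiff {B₁ B₂ : Finset α} (h₁ : B₁ ∈ M.B) (h₂ : B₂ ∈ M.B)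
    (hx : x ∈ B₁ ∆ B₂) : x ∈ M.E := by
  rcases mem_symmDiff.1 hx with ⟨hx, -⟩ | ⟨hx, -⟩
  exacts [M.subset_ground _ h₁ hx, M.subset_ground _ h₂ hx]

theorem Exchangeable.mem_ground (h : M.Exchangeable x y) : x ∈ M.E := by
  obtain ⟨B₁, h₁, B₂, h₂, hd⟩ := h
  exact mem_ground_of_mem_symmDiff h₁ h₂ (by simp [hd])

theorem IsSeparator.inter {S T : Finset α} (hS : M.IsSeparator S) (hT : M.IsSeparator T) :
    M.IsSeparator (S ∩ T) := by
  refine ⟨inter_subset_left.trans hS.1, fun B₁ h₁ B₂ h₂ => ?_⟩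
  convert hS.2 _ (hT.2 B₁ h₁ B₂ h₂) B₂ h₂ using 1
  ext
  simp only [mem_union, mem_inter, mem_sdiff]
  tauto

/-- The recombined basis `(B₁ ∩ S) ∪ (B₂ \ S)` would differ from `B₂` in `(B₁ ∆ B₂) ∩ S = {x}`. -/
theorem IsSeparator.mem_of_exchangeable (hM : M.IsEven) {S : Finset α} (hS : M.IsSeparator S)
    (h : M.Exchangeable x y) (hx : x ∈ S) : y ∈ S := by
  obtain ⟨B₁, h₁, B₂, h₂, hd⟩ := h
  by_contra hy
  have hxy : x ≠ y := by rintro rfl; exact hy hx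
  have hmix : ((B₁ ∩ S) ∪ (B₂ \ S)) ∆ B₂ = {x} := by
    ext a
    have := congrArg (a ∈ ·) hd
    simp only [mem_symmDiff, mem_insert, mem_singleton, eq_iff_iff] at this
    simp only [mem_symmDiff, mem_union, mem_inter, mem_sdiff, mem_singleton]
    grind
  simpa [hmix] using hM.even_card_symmDiff (hS.2 B₁ h₁ B₂ h₂) h₂

/-- Exchanging a pair of `B₂ ∆ B₁` inside `S` brings `B₂` closer to `B₁` on `S` without changing
it outside `S`. -/
theorem IsEven.isSeparator_of_exchangeable_imp (hM : M.IsEven) {S : Finset α} (hS : S ⊆ M.E)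
    (hclosed : ∀ x ∈ S, ∀ y, M.Exchangeable x y → y ∈ S) : M.IsSeparator S := by
  refine ⟨hS, fun B₁ h₁ B₂ h₂ => ?_⟩
  induction hn : #((B₁ ∆ B₂) ∩ S) using Nat.strong_induction_on generalizing B₂ with
  | _ n ih =>
  obtain hempty | ⟨e, he⟩ := ((B₁ ∆ B₂) ∩ S).eq_empty_or_nonempty
  · convert h₂ using 1
    ext a
    have := fun h => eq_empty_iff_forall_notMem.1 hempty a (mem_inter.2 h)
    simp only [mem_symmDiff, mem_union, mem_inter, mem_sdiff] at this ⊢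
    tauto
  · obtain ⟨heD, heS⟩ := mem_inter.1 he
    obtain ⟨f, hf, hfe, h₂'⟩ := hM.exists_exchange_ne h₂ h₁ (symmDiff_comm B₁ B₂ ▸ heD)
    rw [symmDiff_comm] at hf
    have hfS : f ∈ S := hclosed e heS f (exchangeable_of_fundGraph_adj h₂ ⟨hfe.symm, h₂'⟩)
    have hsub : {e, f} ⊆ (B₁ ∆ B₂) ∩ S := by simp [insert_subset_iff, *]
    have hcard : #((B₁ ∆ (B₂ ∆ {e, f})) ∩ S) = n - 2 := by
      rw [← symmDiff_assoc, symmDiff_of_ge (hsub.trans inter_subset_left), sdiff_inter_right_comm,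
        card_sdiff_of_subset hsub, hn, card_pair hfe.symm]
    have hout : (B₂ ∆ {e, f}) \ S = B₂ \ S := by
      ext a
      simp only [mem_sdiff, mem_symmDiff, mem_insert, mem_singleton]
      by_cases ha : a ∈ S
      · simp [ha]
      · simp [ha, ne_of_mem_of_not_mem heS ha |>.symm, ne_of_mem_of_not_mem hfS ha |>.symm]
    have hpos : 0 < n := hn ▸ card_pos.2 ⟨e, he⟩
    rw [← hout]
    exact ih _ (by omega) _ h₂' hcard

open scoped Classical in
noncomputable def exchangeClass (M : DeltaMatroid α) (x : α) : Finset α :=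
  M.E.filter fun y => y = x ∨ M.Exchangeable x y

theorem mem_exchangeClass : y ∈ M.exchangeClass x ↔ y ∈ M.E ∧ (y = x ∨ M.Exchangeable x y) := by
  classical
  simp [exchangeClass]

theorem IsEven.isSeparator_exchangeClass (hM : M.IsEven) (x : α) :
    M.IsSeparator (M.exchangeClass x) := by
  refine hM.isSeparator_of_exchangeable_imp (fun y hy => (mem_exchangeClass.1 hy).1)
    fun u hu v huv => ?_
  refine mem_exchangeClass.2 ⟨huv.symm.mem_ground, ?_⟩
  obtain rfl | hvx := eq_or_ne v x
  · exact .inl rfl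
  rcases (mem_exchangeClass.1 hu).2 with rfl | hxu
  exacts [.inr huv, .inr (hM.exchangeable_trans hxu huv hvx.symm)]

theorem IsEven.isComponent_exchangeClass (hM : M.IsEven) (hx : x ∈ M.E) :
    M.IsComponent (M.exchangeClass x) := by
  have hxC : x ∈ M.exchangeClass x := mem_exchangeClass.2 ⟨hx, .inl rfl⟩
  refine ⟨hM.isSeparator_exchangeClass x, ⟨x, hxC⟩, fun X hX ⟨u, hu⟩ hXC => ?_⟩
  have hxX : x ∈ X := by
    rcases (mem_exchangeClass.1 (hXC hu)).2 with rfl | hxu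
    exacts [hu, hX.mem_of_exchangeable hM hxu.symm hu]
  refine hXC.antisymm fun v hv => ?_
  rcases (mem_exchangeClass.1 hv).2 with rfl | hxv
  exacts [hxX, hX.mem_of_exchangeable hM hxv hxX]

theorem IsComponent.subset_exchangeClass {C : Finset α} (hC : M.IsComponent C) (hM : M.IsEven)
    (hx : x ∈ C) : C ⊆ M.exchangeClass x := by
  have hxC : x ∈ C ∩ M.exchangeClass x :=
    mem_inter.2 ⟨hx, mem_exchangeClass.2 ⟨hC.1.1 hx, .inl rfl⟩⟩
  rw [← hC.2.2 _ (hC.1.inter (hM.isSeparator_exchangeClass x)) ⟨x, hxC⟩ inter_subset_left]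
  exact inter_subset_right

end DeltaMatroid

theorem statement6_general (M : DeltaMatroid α) (hM : M.IsEven) (x y : α)
    (hxy : x ≠ y) :
    (∃ C, M.IsComponent C ∧ x ∈ C ∧ y ∈ C) ↔
      (∃ B₁ ∈ M.B, ∃ B₂ ∈ M.B, B₁ ∆ B₂ = ({x, y} : Finset α)) := by
  change _ ↔ M.Exchangeable x y
  constructor
  · rintro ⟨C, hC, hxC, hyC⟩
    have hy := DeltaMatroid.mem_exchangeClass.1 (hC.subset_exchangeClass hM hxC hyC)
    exact hy.2.resolve_left hxy.symm
  · intro h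
    exact ⟨_, hM.isComponent_exchangeClass h.mem_ground,
      DeltaMatroid.mem_exchangeClass.2 ⟨h.mem_ground, .inl rfl⟩,
      DeltaMatroid.mem_exchangeClass.2 ⟨h.symm.mem_ground, .inr h⟩⟩

/-- In an even delta-matroid, distinct ground-set elements `x` and `y` lie in a
common component iff some two bases have symmetric difference `{x, y}`. -/
theorem statement6 (M : DeltaMatroid α) (hM : M.IsEven) (x y : α)
    (hx : x ∈ M.E) (hy : y ∈ M.E) (hxy : x ≠ y) :
    (∃ C, M.IsComponent C ∧ x ∈ C ∧ y ∈ C) ↔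
      (∃ B₁ ∈ M.B, ∃ B₂ ∈ M.B, B₁ ∆ B₂ = ({x, y} : Finset α)) :=
  statement6_general M hM x y hxy
end

section
/- For an even delta-matroid M = (E, B), a subset X ⊆ E is a separator of M if and only if |X ∩ B| has the same parity for every base B ∈ B. -/
open scoped symmDiff

variable {α : Type*} [DecidableEq α]

/-! If `X` is a separator, recombining `B₁ ∩ X` with `B₂ \ X` gives a base, whose size has the
parity of `|B₂|` by evenness; hence `|B₁ ∩ X| ≡ |B₂ ∩ X|`.

Conversely, under the parity condition an exchange from `B₂` towards `B₁` at some `e ∈ X` must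
toggle a second element `f` that also lies in `X`, as otherwise `|X ∩ B₂|` would change parity.
Such a step fixes `B₂ \ X` and shrinks `(B₁ ∆ B₂) ∩ X`, so iterating it reaches the base
`(B₁ ∩ X) ∪ (B₂ \ X)`. -/

open Finset

theorem Finset.card_symmDiff_add_two_mul_card_inter_s7 (s t : Finset α) :
    #(s ∆ t) + 2 * #(s ∩ t) = #s + #t := by
  rw [symmDiff_eq_sup_sdiff_inf, sup_eq_union, inf_eq_inter,
    card_sdiff_of_subset (inter_subset_left.trans subset_union_left), ← card_union_add_card_inter]
  have := card_le_card (inter_subset_union (s := s) (t := t))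
  omega

theorem Finset.card_inter_symmDiff_mod_two_ne {X P : Finset α} {e : α} (hP : X ∩ P = {e})
    (B : Finset α) : #(X ∩ (B ∆ P)) % 2 ≠ #(X ∩ B) % 2 := by
  have := card_symmDiff_add_two_mul_card_inter_s7 (X ∩ B) (X ∩ P)
  rw [hP, card_singleton] at this
  rw [show X ∩ (B ∆ P) = (X ∩ B) ∆ (X ∩ P) from inf_symmDiff_distrib_left X B P, hP]
  omega

namespace DeltaMatroid

variable {M : DeltaMatroid α} {X B₁ B₂ : Finset α}

theorem exists_exchange_mem_inter
    (hpar : ∀ B₁ ∈ M.B, ∀ B₂ ∈ M.B, #(X ∩ B₁) % 2 = #(X ∩ B₂) % 2)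
    (h₁ : B₁ ∈ M.B) (h₂ : B₂ ∈ M.B) {e : α} (he : e ∈ (B₁ ∆ B₂) ∩ X) :
    ∃ f ∈ (B₁ ∆ B₂) ∩ X, B₂ ∆ {e, f} ∈ M.B := by
  rw [mem_inter] at he
  obtain ⟨f, hf, hB⟩ := M.exchange B₂ h₂ B₁ h₁ e (symmDiff_comm B₁ B₂ ▸ he.1)
  rw [symmDiff_comm] at hf
  refine ⟨f, mem_inter.2 ⟨hf, ?_⟩, hB⟩
  by_contra hfX
  have hXP : X ∩ {e, f} = {e} := by
    rw [inter_insert_of_mem he.2, inter_singleton_of_notMem hfX, insert_empty]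
  exact card_inter_symmDiff_mod_two_ne hXP B₂ (hpar _ hB _ h₂)

theorem inter_union_sdiff_mem
    (hpar : ∀ B₁ ∈ M.B, ∀ B₂ ∈ M.B, #(X ∩ B₁) % 2 = #(X ∩ B₂) % 2)
    (h₁ : B₁ ∈ M.B) (h₂ : B₂ ∈ M.B) : (B₁ ∩ X) ∪ (B₂ \ X) ∈ M.B := by
  induction hn : #((B₁ ∆ B₂) ∩ X) using Nat.strong_induction_on generalizing B₂ with
  | _ n ih =>
  obtain hD | ⟨e, he⟩ := ((B₁ ∆ B₂) ∩ X).eq_empty_or_nonempty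
  · have hagree : B₁ ∩ X = B₂ ∩ X :=
      symmDiff_eq_bot.1 ((inf_symmDiff_distrib_right B₁ B₂ X).symm.trans hD)
    rw [hagree]
    convert h₂ using 1
    exact sup_inf_sdiff B₂ X
  obtain ⟨f, hf, hB⟩ := exists_exchange_mem_inter hpar h₁ h₂ he
  have hpair : {e, f} ⊆ (B₁ ∆ B₂) ∩ X := insert_subset he (singleton_subset_iff.2 hf)
  have hsdiff : B₂ ∆ {e, f} \ X = B₂ \ X := by
    ext x
    by_cases hx : x ∈ X
    · simp [hx]
    · have hxe : x ≠ e := fun h => hx (h ▸ (mem_inter.1 he).2)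
      have hxf : x ≠ f := fun h => hx (h ▸ (mem_inter.1 hf).2)
      simp [hx, mem_symmDiff, hxe, hxf]
  have hsmaller : (B₁ ∆ (B₂ ∆ {e, f})) ∩ X ⊂ (B₁ ∆ B₂) ∩ X := by
    rw [← symmDiff_assoc, symmDiff_of_ge (hpair.trans inter_subset_left)]
    refine (ssubset_iff_of_subset (inter_subset_inter_right sdiff_subset)).2 ⟨e, he, ?_⟩
    simp
  rw [← hsdiff]
  exact ih _ (hn ▸ card_lt_card hsmaller) hB rfl

theorem card_inter_mod_two_eq_of_isSeparator (hM : M.IsEven) (hX : M.IsSeparator X)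
    (h₁ : B₁ ∈ M.B) (h₂ : B₂ ∈ M.B) : #(X ∩ B₁) % 2 = #(X ∩ B₂) % 2 := by
  have hcard : #((B₁ ∩ X) ∪ (B₂ \ X)) = #(B₁ ∩ X) + #(B₂ \ X) :=
    card_union_of_disjoint (disjoint_sdiff.mono_left inter_subset_right)
  have := hM _ (hX.2 B₁ h₁ B₂ h₂) _ h₂
  have := card_inter_add_card_sdiff B₂ X
  rw [inter_comm X, inter_comm X]
  omega

end DeltaMatroid

/-- For an even delta-matroid, `X ⊆ E` is a separator iff `|X ∩ B|` has the same
parity for every base `B`. -/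
theorem statement7 (M : DeltaMatroid α) (hM : M.IsEven) (X : Finset α)
    (hX : X ⊆ M.E) :
    M.IsSeparator X ↔
      ∀ B₁ ∈ M.B, ∀ B₂ ∈ M.B, (X ∩ B₁).card % 2 = (X ∩ B₂).card % 2 :=
  ⟨fun hsep _ h₁ _ h₂ => M.card_inter_mod_two_eq_of_isSeparator hM hsep h₁ h₂,
    fun hpar => ⟨hX, fun _ h₁ _ h₂ => M.inter_union_sdiff_mem hpar h₁ h₂⟩⟩
end

section
/- Let G be a graph with a Hamiltonian path starting from a vertex x, and let m ≥ 3. Then in the Cartesian product K_m □ G, every edge of the form (u, x)(v, x) with u ≠ v in K_m is pancyclic, i.e., lies in a cycle of every length k with 3 ≤ k ≤ m·|V(G)|. -/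
/-!
Let `x = x₀, x₁, …, x_{n-1}` be the Hamiltonian path. Closing a `(v, x)`–`(u, x)` path of length
`k - 1 ≥ 2` with the edge `(u, x)(v, x)` gives a `k`-cycle, so it suffices to find such paths of
every length `ℓ < m n`. By induction along the path, there are `(u, x₀)`–`(v, x₀)` paths of every
length `1 ≤ ℓ < m t` inside the rows `x₀, …, x_{t-1}`: short ones lie in the copy of `K_m` in
row `x₀`; a longer one climbs to `(u, x₁)`, follows a path of the induction hypothesis to some
`(v', x₁)`, descends to `(v', x₀)` and finishes in row `x₀` with a path to `v` that avoids `u`.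
-/

open scoped symmDiff

variable {α : Type*} [DecidableEq α]

namespace SimpleGraph

section BoxProdLeft

variable {V W : Type*} {G : SimpleGraph V} (H : SimpleGraph W) {a₁ a₂ : V} (b : W)

lemma Walk.length_boxProdLeft (p : G.Walk a₁ a₂) : (p.boxProdLeft H b).length = p.length := by
  induction p with
  | nil => rfl
  | cons _ _ ih => exact congrArg (· + 1) ih

lemma Walk.support_boxProdLeft (p : G.Walk a₁ a₂) :
    (p.boxProdLeft H b).support = p.support.map (·, b) := by
  induction p with
  | nil => rfl
  | cons _ _ ih => exact congrArg (List.cons _) ih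

lemma Walk.IsPath.boxProdLeft {p : G.Walk a₁ a₂} (hp : p.IsPath) :
    (p.boxProdLeft H b).IsPath :=
  hp.map (G.boxProdLeft H b).injective

variable {H} in
lemma Walk.IsPath.cons_append_cons_boxProdLeft {x x' : W} (hxx' : H.Adj x x') {u v v' : V}
    {Q : (G □ H).Walk (u, x') (v', x')} (hQ : Q.IsPath) (hQx : ∀ z ∈ Q.support, z.2 ≠ x)
    {R : G.Walk v' v} (hR : R.IsPath) (huR : u ∉ R.support) :
    (Walk.cons (boxProd_adj_right.mpr hxx')
      (Q.append (.cons (boxProd_adj_right.mpr hxx'.symm) (R.boxProdLeft H x)))).IsPath := by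
  rw [Walk.isPath_def, Walk.support_cons, Walk.support_append, Walk.support_cons,
    List.tail_cons, List.nodup_cons, List.nodup_append, R.support_boxProdLeft]
  refine ⟨?_, hQ.support_nodup, R.support_boxProdLeft H x ▸ (hR.boxProdLeft H x).support_nodup,
    ?_⟩
  · simp only [List.mem_append, List.mem_map, Prod.mk.injEq, not_or, not_exists, not_and]
    exact ⟨fun h => hQx _ h rfl, fun c hc hcu _ => huR (hcu ▸ hc)⟩
  · intro z hz z' hz' hzz'
    obtain ⟨c, -, rfl⟩ := List.mem_map.mp hz'
    exact hQx z hz (hzz' ▸ rfl)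

end BoxProdLeft

variable {ι V : Type*} [Fintype ι]

lemma exists_isPath_top_length_avoiding {u v : ι} (hvu : v ≠ u) {b : ℕ}
    (hb : b + 2 ≤ Fintype.card ι) :
    ∃ (w : ι) (p : (⊤ : SimpleGraph ι).Walk w v), p.IsPath ∧ p.length = b ∧ u ∉ p.support := by
  classical
  induction b with
  | zero => exact ⟨v, .nil, .nil, rfl, by simpa using hvu.symm⟩
  | succ b ih =>
    obtain ⟨w, p, hp, rfl, hu⟩ := ih (by omega)
    obtain ⟨w', -, hw'⟩ := Finset.exists_mem_notMem_of_card_lt_card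
      (s := insert u p.support.toFinset) (t := Finset.univ) <| calc
        _ ≤ p.support.toFinset.card + 1 := Finset.card_insert_le _ _
        _ ≤ p.length + 2 := by simpa using List.toFinset_card_le p.support
        _ < _ := by rw [Finset.card_univ]; omega
    rw [Finset.mem_insert, List.mem_toFinset, not_or] at hw'
    have hadj : (⊤ : SimpleGraph ι).Adj w' w :=
      (top_adj _ _).mpr fun h => hw'.2 (h ▸ p.start_mem_support)
    exact ⟨w', .cons hadj p, hp.cons hw'.2, rfl, by simp [Ne.symm hw'.1, hu]⟩

lemma exists_isPath_top_length {u v : ι} (huv : u ≠ v) {ℓ : ℕ} (hℓ : 1 ≤ ℓ)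
    (hℓι : ℓ < Fintype.card ι) :
    ∃ p : (⊤ : SimpleGraph ι).Walk u v, p.IsPath ∧ p.length = ℓ := by
  obtain ⟨w, p, hp, hlen, hu⟩ :=
    exists_isPath_top_length_avoiding huv.symm (b := ℓ - 1) (by omega)
  have hadj : (⊤ : SimpleGraph ι).Adj u w := (top_adj _ _).mpr fun h => hu (h ▸ p.start_mem_support)
  exact ⟨.cons hadj p, hp.cons hu, by rw [Walk.length_cons]; omega⟩

theorem Walk.IsPath.exists_isPath_top_boxProd (hι : 3 ≤ Fintype.card ι) {G : SimpleGraph V}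
    {x y : V} {P : G.Walk x y} (hP : P.IsPath) {u v : ι} (huv : u ≠ v) {ℓ : ℕ} (hℓ : 1 ≤ ℓ)
    (hℓP : ℓ < Fintype.card ι * (P.length + 1)) :
    ∃ Q : ((⊤ : SimpleGraph ι) □ G).Walk (u, x) (v, x),
      Q.IsPath ∧ Q.length = ℓ ∧ ∀ z ∈ Q.support, z.2 ∈ P.support := by
  induction P generalizing u v ℓ with
  | nil =>
    obtain ⟨p, hp, hlen⟩ := exists_isPath_top_length huv hℓ (by simpa using hℓP)
    refine ⟨p.boxProdLeft G _, hp.boxProdLeft G _, by rwa [p.length_boxProdLeft], ?_⟩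
    simp [Walk.support_boxProdLeft]
  | @cons x x' y hxx' P' ih =>
    rw [Walk.cons_isPath_iff] at hP
    by_cases hrow : ℓ < Fintype.card ι
    · obtain ⟨p, hp, hlen⟩ := exists_isPath_top_length huv hℓ hrow
      refine ⟨p.boxProdLeft G _, hp.boxProdLeft G _, by rwa [p.length_boxProdLeft], ?_⟩
      simp [Walk.support_boxProdLeft]
    -- `(u, x) → (u, x') ⇝ (v', x') → (v', x) ⇝ (v, x)`: the middle path comes from the induction
    -- hypothesis, the last one runs in row `x` avoiding `u` and is as long as allowed.
    set b := min (Fintype.card ι - 2) (ℓ - 3)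
    obtain ⟨v', R, hR, hRlen, huR⟩ := exists_isPath_top_length_avoiding huv.symm (b := b) (by omega)
    have huv' : u ≠ v' := fun h => huR (h ▸ R.start_mem_support)
    have hcard_le : Fintype.card ι ≤ Fintype.card ι * (P'.length + 1) :=
      Nat.le_mul_of_pos_right _ (by omega)
    rw [Walk.length_cons, mul_add_one] at hℓP
    obtain ⟨Q, hQ, hQlen, hQrows⟩ := ih hP.1 huv' (ℓ := ℓ - 2 - b) (by omega) (by omega)
    have hQx : ∀ z ∈ Q.support, z.2 ≠ x := fun z hz h => hP.2 (h ▸ hQrows z hz)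
    refine ⟨_, hQ.cons_append_cons_boxProdLeft hxx' hQx hR huR, ?_, fun z hz => ?_⟩
    · simp only [Walk.length_cons, Walk.length_append, R.length_boxProdLeft]
      omega
    simp only [Walk.support_cons, Walk.support_append, List.tail_cons, List.mem_cons,
      List.mem_append, R.support_boxProdLeft, List.mem_map] at hz ⊢
    rcases hz with rfl | hz | ⟨c, -, rfl⟩
    · exact .inl rfl
    · exact .inr (hQrows z hz)
    · exact .inl rfl

end SimpleGraph

lemma cycleThroughEdge_of_isPath {V : Type*} {H : SimpleGraph V} {a b : V} (h : H.Adj a b)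
    {Q : H.Walk b a} (hQ : Q.IsPath) (hlen : 2 ≤ Q.length) :
    CycleThroughEdge H s(a, b) (Q.length + 1) :=
  ⟨a, .cons h Q, SimpleGraph.Walk.isCycle_iff_isPath_tail_and_le_length.mpr
    ⟨by simpa using hQ, by rw [SimpleGraph.Walk.length_cons]; omega⟩, rfl, by simp⟩

/-- If `G` has a Hamiltonian path starting at `x` and `m ≥ 3`, then every edge
`(u,x)(v,x)` of `K_m □ G` with `u ≠ v` is pancyclic. -/
theorem statement11 {V : Type*} [Fintype V] [DecidableEq V] (G : SimpleGraph V) (x : V)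
    (hham : ∃ (y : V) (p : G.Walk x y), p.IsHamiltonian)
    (m : ℕ) (hm : 3 ≤ m) (u v : Fin m) (huv : u ≠ v) :
    ∀ k, 3 ≤ k → k ≤ m * Fintype.card V →
      CycleThroughEdge ((⊤ : SimpleGraph (Fin m)).boxProd G)
        s((u, x), (v, x)) k := by
  intro k hk3 hk
  obtain ⟨y, p, hp⟩ := hham
  have hcard : Fintype.card V = p.length + 1 := by
    have := Fintype.card_pos_iff.mpr ⟨x⟩
    rw [hp.length_eq]
    omega
  obtain ⟨Q, hQ, hQlen, -⟩ := hp.isPath.exists_isPath_top_boxProd (by simpa using hm) huv.symm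
    (ℓ := k - 1) (by omega) (by rw [Fintype.card_fin, ← hcard]; omega)
  have hadj : ((⊤ : SimpleGraph (Fin m)) □ G).Adj (u, x) (v, x) :=
    SimpleGraph.boxProd_adj_left.mpr huv
  simpa [hQlen, Nat.sub_add_cancel (by omega : 1 ≤ k)] using
    cycleThroughEdge_of_isPath hadj hQ (by omega)
end

section
/- Let G be a graph partitioned into induced subgraphs G1 and G2 (i.e., V(G) = V(G1) ⊔ V(G2)) with |V(G1)| ≥ 3. Let x1y1 ∈ E(G1) and x2y2 ∈ E(G2) with x1x2, y1y2 ∈ E(G). If x1y1 is pancyclic in G1 and x2y2 is even pancyclic in G2, then the edge x1x2 is almost pancyclic in G, i.e., it lies in a cycle of every length k with 4 ≤ k ≤ |V(G)|. -/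
open scoped symmDiff

variable {α : Type*} [DecidableEq α]

/-!
A path `x₁ ⟶ y₁` of length `p` inside `s` and a path `x₂ ⟶ y₂` of length `q` inside `sᶜ`,
closed up by the edges `x₁x₂` and `y₁y₂`, form a cycle of length `p + q + 2` through `x₁x₂`.
Pancyclicity of `x₁y₁` supplies such paths for every `1 ≤ p ≤ |s| - 1`; even pancyclicity of
`x₂y₂` supplies `q = 1`, every odd `q ≤ |sᶜ| - 1`, and `q = |sᶜ| - 1`. Choosing `p` among
`k - 3`, `|s| - 1`, `|s| - 2` then reaches every `4 ≤ k ≤ |V|`.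
-/

open SimpleGraph

namespace SimpleGraph

variable {V : Type*} {G : SimpleGraph V}

theorem Walk.IsCycle.exists_isPath_of_mem_edges {a b : V} {c : G.Walk a a} (hc : c.IsCycle)
    (h : s(a, b) ∈ c.edges) : ∃ p : G.Walk a b, p.IsPath ∧ p.length + 1 = c.length := by
  have hb : b ∈ c.toSubgraph.neighborSet a := Walk.adj_toSubgraph_iff_mem_edges.mpr h
  rw [hc.neighborSet_toSubgraph_endpoint, Set.mem_insert_iff, Set.mem_singleton_iff] at hb
  rcases hb with rfl | rfl
  · exact ⟨c.tail.reverse, hc.isPath_tail.reverse, by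
      rw [Walk.length_reverse, Walk.length_tail_add_one hc.not_nil]⟩
  · exact ⟨c.dropLast, hc.isPath_dropLast, Walk.length_dropLast_add_one hc.not_nil⟩

theorem CycleThroughEdge.exists_isPath {a b : V} {k : ℕ} (h : CycleThroughEdge G s(a, b) k) :
    ∃ p : G.Walk a b, p.IsPath ∧ p.length + 1 = k := by
  classical
  obtain ⟨v, c, hc, rfl, he⟩ := h
  have ha : a ∈ c.support := c.fst_mem_support_of_mem_edges he
  rw [← c.length_rotate a ha]
  exact (hc.rotate ha).exists_isPath_of_mem_edges ((c.rotate_edges a ha).mem_iff.mpr he)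

theorem Adj.exists_isPath_of_cycleThroughEdge {x y : V} (hxy : G.Adj x y) {p : ℕ}
    (hp : p = 1 ∨ CycleThroughEdge G s(x, y) (p + 1)) :
    ∃ P : G.Walk x y, P.IsPath ∧ P.length = p := by
  rcases hp with rfl | hc
  · exact ⟨hxy.toWalk, Walk.IsPath.nil.cons (by simpa using hxy.ne), rfl⟩
  · obtain ⟨P, hP, hlen⟩ := hc.exists_isPath
    exact ⟨P, hP, by omega⟩

theorem Walk.IsPath.cycleThroughEdge_of_disjoint {a b c d : V} {P : G.Walk a b}
    {Q : G.Walk c d} (hP : P.IsPath) (hQ : Q.IsPath) (hPQ : P.support.Disjoint Q.support)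
    (hac : G.Adj a c) (hbd : G.Adj b d) (hab : a ≠ b) :
    CycleThroughEdge G s(a, c) (P.length + Q.length + 2) := by
  have hcP : c ∉ P.support := fun hc => hPQ hc Q.start_mem_support
  have hbQ : b ∉ Q.reverse.support := by
    simpa using fun hb => hPQ P.end_mem_support hb
  have hcyc : ((Walk.cons hac.symm P).append (Walk.cons hbd Q.reverse)).IsCycle := by
    refine (hP.cons hcP).isCycle_append (hQ.reverse.cons hbQ) ?_ ?_
    · simpa using hPQ
    · have : P.length ≠ 0 := fun h => hab (Walk.eq_of_length_eq_zero h)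
      simp only [Walk.length_cons]
      omega
  refine ⟨c, _, hcyc, ?_, ?_⟩
  · simp only [Walk.length_append, Walk.length_cons, Walk.length_reverse]
    omega
  · simp [Sym2.eq_swap]

theorem cycleThroughEdge_of_isPath_induce_compl {s : Set V} {x₁ y₁ : s} {x₂ y₂ : ↥sᶜ}
    (hx : G.Adj x₁ x₂) (hy : G.Adj y₁ y₂) (hne : x₁ ≠ y₁)
    {P₁ : (G.induce s).Walk x₁ y₁} {P₂ : (G.induce sᶜ).Walk x₂ y₂}
    (hP₁ : P₁.IsPath) (hP₂ : P₂.IsPath) :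
    CycleThroughEdge G s((x₁ : V), x₂) (P₁.length + P₂.length + 2) := by
  let f₁ := (Embedding.induce (G := G) s).toHom
  let f₂ := (Embedding.induce (G := G) sᶜ).toHom
  have hdisj : (P₁.map f₁).support.Disjoint (P₂.map f₂).support := by
    simp only [Walk.support_map, List.disjoint_left, List.mem_map]
    rintro _ ⟨u, -, rfl⟩ ⟨w, -, hw⟩
    exact w.2 (hw ▸ u.2 : f₂ w ∈ s)
  have := (hP₁.map Subtype.val_injective).cycleThroughEdge_of_disjoint
    (hP₂.map Subtype.val_injective) hdisj hx hy (Subtype.coe_ne_coe.mpr hne)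
  rwa [Walk.length_map, Walk.length_map] at this

end SimpleGraph

theorem exists_add_add_two_eq_of_le {n₁ n₂ k : ℕ} (h₁ : 3 ≤ n₁) (hk : 4 ≤ k)
    (hkn : k ≤ n₁ + n₂) :
    ∃ p q, 1 ≤ p ∧ p + 1 ≤ n₁ ∧
      (q = 1 ∨ 3 ≤ q + 1 ∧ q + 1 ≤ n₂ ∧ (Even (q + 1) ∨ q + 1 = n₂)) ∧ p + q + 2 = k := by
  simp only [Nat.even_iff]
  by_cases hsmall : k ≤ n₁ + 2
  · exact ⟨k - 3, 1, by omega, by omega, Or.inl rfl, by omega⟩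
  by_cases hpar : (k - n₁) % 2 = 0
  · exact ⟨n₁ - 1, k - n₁ - 1, by omega, by omega, Or.inr ⟨by omega, by omega, by omega⟩,
      by omega⟩
  by_cases hfull : k < n₁ + n₂
  · exact ⟨n₁ - 2, k - n₁, by omega, by omega, Or.inr ⟨by omega, by omega, by omega⟩,
      by omega⟩
  · exact ⟨n₁ - 1, n₂ - 1, by omega, by omega, Or.inr ⟨by omega, by omega, by omega⟩,
      by omega⟩

/-- If `V(G)` is partitioned into `s` and `sᶜ` with `|s| ≥ 3`, the edge `x₁y₁` of
the subgraph induced on `s` is pancyclic there, the edge `x₂y₂` of the subgraph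
induced on `sᶜ` is even pancyclic there, and `x₁x₂, y₁y₂ ∈ E(G)`, then `x₁x₂` is
almost pancyclic in `G`. -/
theorem statement12 {V : Type*} [Fintype V] (G : SimpleGraph V) (s : Set V)
    [Fintype ↥s] [Fintype ↥sᶜ]
    (x₁ y₁ : ↥s) (x₂ y₂ : ↥sᶜ)
    (h3 : 3 ≤ Fintype.card ↥s)
    (he1 : (G.induce s).Adj x₁ y₁) (he2 : (G.induce sᶜ).Adj x₂ y₂)
    (hx : G.Adj ↑x₁ ↑x₂) (hy : G.Adj ↑y₁ ↑y₂)
    (hp1 : EdgePancyclic (G.induce s) s(x₁, y₁))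
    (hp2 : EdgeEvenPancyclic (G.induce sᶜ) s(x₂, y₂)) :
    EdgeAlmostPancyclic G s((↑x₁ : V), (↑x₂ : V)) := by
  intro k hk4 hkn
  have hcard : Fintype.card V = Fintype.card s + Fintype.card ↥sᶜ := by
    classical
    rw [← Fintype.card_sum]
    exact Fintype.card_congr (Equiv.Set.sumCompl s).symm
  obtain ⟨p, q, hp, hpn, hq, rfl⟩ := exists_add_add_two_eq_of_le h3 hk4 (hcard ▸ hkn)
  obtain ⟨P₁, hP₁, rfl⟩ := he1.exists_isPath_of_cycleThroughEdge (p := p)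
    (by rcases hp.eq_or_lt with rfl | hp; exacts [Or.inl rfl, Or.inr (hp1 _ (by omega) hpn)])
  obtain ⟨P₂, hP₂, rfl⟩ := he2.exists_isPath_of_cycleThroughEdge (p := q)
    (hq.imp_right fun ⟨hq3, hqn, hqe⟩ => hp2 _ hq3 hqn hqe)
  exact cycleThroughEdge_of_isPath_induce_compl hx hy he1.ne hP₁ hP₂
end
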